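/- arXiv:1906.07495 — 4 statements merged into one kernel-verified Lean document; each statement's English description precedes it below -/
import Mathlib

section
/- Let K be a compact Hausdorff space and φ: K → K continuous. For x ∈ K, define the approximating orbit aorb(x) as the intersection of all closed neighborhoods U of x satisfying φ(U) ⊆ U. Then for every f ∈ C(K) with f ∘ φ = f, f is constant on aorb(x), i.e., f(z) = f(x) for all z ∈ aorb(x). -/
/-- Every fixed function of the Koopman operator is constant on the approximating
orbit `aorb(x)`, the intersection of all closed `φ`-invariant neighborhoods of `x`. -/
theorem fixed_function_constant_on_approximating_orbit
    {K : Type*} [TopologicalSpace K] [CompactSpace K] [T2Space K]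
    (φ : K → K) (hφ : Continuous φ) (x : K) (f : C(K, ℂ))
    (hf : ∀ y, f (φ y) = f y) :
    ∀ z ∈ ⋂₀ {U : Set K | IsClosed U ∧ x ∈ interior U ∧ φ '' U ⊆ U}, f z = f x := by
  intro z hz
  have key : ∀ ε > 0, dist (f z) (f x) ≤ ε := by
    intro ε hε
    set U : Set K := {y | dist (f y) (f x) ≤ ε} with hU
    have hclosed : IsClosed U :=
      isClosed_le (Continuous.dist (map_continuous f) continuous_const) continuous_const
    have hint : x ∈ interior U := by
      apply mem_interior.2
      refine ⟨{y | dist (f y) (f x) < ε}, ?_, ?_, ?_⟩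
      · exact fun y (hy : dist (f y) (f x) < ε) => le_of_lt hy
      · exact isOpen_lt (Continuous.dist (map_continuous f) continuous_const) continuous_const
      · simpa using hε
    have hinv : φ '' U ⊆ U := by
      rintro _ ⟨y, hy, rfl⟩
      simpa [hU, hf y] using hy
    exact hz U ⟨hclosed, hint, hinv⟩
  have : dist (f z) (f x) ≤ 0 := le_of_forall_pos_le_add (by simpa using fun ε hε => key ε hε)
  have := le_antisymm this dist_nonneg
  exact dist_eq_zero.mp this
end

section
/- Let K be a compact Hausdorff space, φ: K → K continuous, and for x ∈ K let sorb(x) = ⋃ {aorb(y) : y ∼ x}, where ∼ is the equivalence relation generated by (aorb(x))_{x∈K}. Then every f ∈ C(K) with f ∘ φ = f is constant on sorb(x). -/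
/-- Every fixed function of the Koopman operator is constant on the superorbit
`sorb(x) = ⋃ {aorb(y) : y ∼ x}`, where `∼` is the equivalence relation generated by
the covering by approximating orbits. -/
theorem fixed_function_constant_on_superorbit
    {K : Type*} [TopologicalSpace K] [CompactSpace K] [T2Space K]
    (φ : K → K) (hφ : Continuous φ) (x : K) (f : C(K, ℂ))
    (hf : ∀ y, f (φ y) = f y) :
    let aorb : K → Set K :=
      fun a => ⋂₀ {U : Set K | IsClosed U ∧ a ∈ interior U ∧ φ '' U ⊆ U}
    let sorb : Set K :=
      ⋃ y ∈ {y | Relation.EqvGen (fun a b => (aorb a ∩ aorb b).Nonempty) y x}, aorb y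
    ∀ z ∈ sorb, f z = f x := by
  intro aorb sorb z hz
  -- key: f is constant on each aorb a
  have key : ∀ a : K, ∀ w ∈ aorb a, f w = f a := by
    intro a w hw
    have : ∀ ε : ℝ, 0 < ε → dist (f w) (f a) ≤ ε := by
      intro ε hε
      have hU : {u : K | dist (f u) (f a) ≤ ε} ∈
          {U : Set K | IsClosed U ∧ a ∈ interior U ∧ φ '' U ⊆ U} := by
        refine ⟨?_, ?_, ?_⟩
        · exact isClosed_le (Continuous.dist f.continuous continuous_const) continuous_const
        · have hopen : IsOpen {u : K | dist (f u) (f a) < ε} :=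
            isOpen_lt (Continuous.dist f.continuous continuous_const) continuous_const
        
          have hsub : {u : K | dist (f u) (f a) < ε} ⊆ {u : K | dist (f u) (f a) ≤ ε} :=
            fun u (hu : dist (f u) (f a) < ε) => le_of_lt hu
          exact interior_maximal hsub hopen (by simpa using hε)
        · rintro _ ⟨u, hu, rfl⟩
          simpa [hf u] using hu
      exact hw _ hU
    have : dist (f w) (f a) ≤ 0 := le_of_forall_gt_imp_ge_of_dense (by
      intro ε hε; exact this ε hε)
    have := le_antisymm this dist_nonneg
    exact eq_of_dist_eq_zero this
  -- along the equivalence relation the value is constant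
  have heq : ∀ a b : K,
      Relation.EqvGen (fun a b => (aorb a ∩ aorb b).Nonempty) a b → f a = f b := by
    intro a b h
    induction h with
    | rel a b hab =>
        obtain ⟨w, hwa, hwb⟩ := hab
        rw [← key a w hwa, key b w hwb]
    | refl a => rfl
    | symm a b _ ih => exact ih.symm
    | trans a b c _ _ ih₁ ih₂ => exact ih₁.trans ih₂
  obtain ⟨y, hy, hzy⟩ := by simpa [sorb] using hz
  rw [key y z hzy, heq y x hy]
end

section
/- Let K be the closed unit disk in ℂ and φ(r e^{2πiα}) = r e^{2πi(α+r)}. Then a continuous function f: K → ℂ satisfies f ∘ φ = f if and only if f is constant on every circle {z ∈ K : |z| = c} for all c ∈ [0,1], i.e., f factors through the absolute value map. -/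
open Complex

/-- The point `r·e^{it}` of the closed unit disk. -/
noncomputable def Kpt (r t : ℝ) (hr0 : 0 ≤ r) (hr1 : r ≤ 1) :
    ↥{z : ℂ | ‖z‖ ≤ 1} :=
  ⟨(r : ℂ) * Complex.exp ((t : ℂ) * Complex.I), by
    show ‖_‖ ≤ 1
    rw [norm_mul, Complex.norm_real, Real.norm_eq_abs, Complex.norm_exp_ofReal_mul_I, mul_one, _root_.abs_of_nonneg hr0]
    exact hr1⟩

lemma Kpt_abs (r t : ℝ) (hr0 : 0 ≤ r) (hr1 : r ≤ 1) :
    ‖(Kpt r t hr0 hr1).1‖ = r := by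
  show ‖(r : ℂ) * Complex.exp ((t : ℂ) * Complex.I)‖ = r
  rw [norm_mul, Complex.norm_real, Real.norm_eq_abs, Complex.norm_exp_ofReal_mul_I, mul_one, _root_.abs_of_nonneg hr0]

/-- On a circle of irrational radius, an `f` invariant under rotation by the radius
is constant. -/
lemma irr_const {f : ↥{z : ℂ | ‖z‖ ≤ 1} → ℂ} (hf : Continuous f)
    (hrot : ∀ (r t : ℝ) (hr0 : 0 ≤ r) (hr1 : r ≤ 1),
      f (Kpt r (t + 2 * Real.pi * r) hr0 hr1) = f (Kpt r t hr0 hr1))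
    {r : ℝ} (hirr : Irrational r) (hr0 : 0 ≤ r) (hr1 : r ≤ 1)
    (z w : ↥{z : ℂ | ‖z‖ ≤ 1})
    (hz : ‖z.1‖ = r) (hw : ‖w.1‖ = r) : f z = f w := by
  set g : ℝ → ℂ := fun t => f (Kpt r t hr0 hr1) with hg
  have hgc : Continuous g := by
    apply hf.comp
    apply Continuous.subtype_mk
    fun_prop
  have hper : ∀ t, g (t + 2 * Real.pi) = g t := by
    intro t
    have hpt : Kpt r (t + 2 * Real.pi) hr0 hr1 = Kpt r t hr0 hr1 := by
      apply Subtype.ext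
      show (r : ℂ) * Complex.exp (((t + 2 * Real.pi : ℝ) : ℂ) * Complex.I)
          = (r : ℂ) * Complex.exp ((t : ℂ) * Complex.I)
      rw [show (((t + 2 * Real.pi : ℝ)) : ℂ) * Complex.I
          = (t : ℂ) * Complex.I + 2 * (Real.pi : ℂ) * Complex.I by push_cast; ring,
        Complex.exp_add, Complex.exp_two_pi_mul_I, mul_one]
    simp only [hg, hpt]
  -- the subgroup of invariance periods (divided by 2π)
  set S : AddSubgroup ℝ :=
    { carrier := {s : ℝ | ∀ t, g (t + 2 * Real.pi * s) = g t}
      zero_mem' := by intro t; simp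
      add_mem' := by
        intro a b ha hb t
        have h1 := ha (t + 2 * Real.pi * b)
        rw [show t + 2 * Real.pi * (a + b) = t + 2 * Real.pi * b + 2 * Real.pi * a by ring,
          h1, hb t]
      neg_mem' := by
        intro a ha t
        have h1 := ha (t + 2 * Real.pi * (-a))
        rw [show t + 2 * Real.pi * (-a) + 2 * Real.pi * a = t by ring] at h1
        exact h1.symm } with hS
  have h1S : (1 : ℝ) ∈ S := by intro t; rw [mul_one]; exact hper t
  have hrS : r ∈ S := fun t => hrot r t hr0 hr1
  have hdense : Dense (S : Set ℝ) := by
    rcases AddSubgroup.dense_or_cyclic (AddSubgroup.closure {1, r}) with hd | ⟨a, ha⟩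
    · refine hd.mono ?_
      have hle : AddSubgroup.closure {1, r} ≤ S := by
        rw [AddSubgroup.closure_le]
        rintro x (rfl | rfl)
        · exact h1S
        · exact hrS
      exact fun x hx => hle hx
    · exfalso
      have h1m : (1 : ℝ) ∈ AddSubgroup.closure ({1, r} : Set ℝ) :=
        AddSubgroup.subset_closure (by simp)
      have hrm : r ∈ AddSubgroup.closure ({1, r} : Set ℝ) :=
        AddSubgroup.subset_closure (by simp)
      rw [ha, AddSubgroup.mem_closure_singleton] at h1m hrm
      obtain ⟨m, hm⟩ := h1m
      obtain ⟨n, hn⟩ := hrm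
      rw [zsmul_eq_mul] at hm hn
      have hm0 : (m : ℝ) ≠ 0 := by
        intro h
        rw [h, zero_mul] at hm
        exact one_ne_zero hm.symm
      have hrq : r = (n : ℝ) / (m : ℝ) := by
        rw [eq_div_iff hm0, ← hn]
        have : (n : ℝ) * a * m = n * ((m : ℝ) * a) := by ring
        rw [this, hm, mul_one]
      refine Rat.not_irrational ((n : ℚ) / (m : ℚ)) ?_
      rwa [show (((n : ℚ) / (m : ℚ) : ℚ) : ℝ) = (n : ℝ) / (m : ℝ) by push_cast; ring, ← hrq]
  -- g is constant
  have hgconst : ∀ t, g t = g 0 := by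
    intro t
    have hh : Continuous (fun s : ℝ => g (2 * Real.pi * s)) := by fun_prop
    have heq : (fun s : ℝ => g (2 * Real.pi * s)) = fun _ => g 0 := by
      apply Continuous.ext_on hdense hh continuous_const
      intro s hs
      have := hs 0
      rw [zero_add] at this
      exact this
    have := congrFun heq (t / (2 * Real.pi))
    rwa [show 2 * Real.pi * (t / (2 * Real.pi)) = t by
      field_simp] at this
  have key : ∀ u : ↥{z : ℂ | ‖z‖ ≤ 1}, ‖u.1‖ = r → f u = g 0 := by
    intro u hu
    have hpt : Kpt r u.1.arg hr0 hr1 = u := by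
      apply Subtype.ext
      show (r : ℂ) * Complex.exp ((u.1.arg : ℂ) * Complex.I) = u.1
      rw [← hu]
      exact Complex.norm_mul_exp_arg_mul_I u.1
    have : g u.1.arg = f u := by rw [hg]; simp only [hpt]
    rw [← this, hgconst]
  rw [key z hz, key w hw]

/-- For the closed unit disk `K` and `φ(z) = z·e^{2πi|z|}`, a continuous `f : K → ℂ`
satisfies `f ∘ φ = f` iff `f` is constant on every circle `{|z| = c}`. -/
theorem fixed_iff_radial :
    let K := {z : ℂ | ‖z‖ ≤ 1}
    let φ : K → K := fun z =>
      ⟨z.1 * Complex.exp (((2 * Real.pi * ‖z.1‖ : ℝ) : ℂ) * Complex.I), by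
        show ‖z.1 * Complex.exp _‖ ≤ 1
        rw [norm_mul, Complex.norm_exp_ofReal_mul_I, mul_one]
        exact z.2⟩
    ∀ f : K → ℂ, Continuous f →
      ((∀ z : K, f (φ z) = f z) ↔
        (∀ z w : K, ‖z.1‖ = ‖w.1‖ → f z = f w)) := by
  intro K φ f hf
  constructor
  · intro hfix z w habs
    -- rotational invariance in `Kpt` form
    have hrot : ∀ (r t : ℝ) (hr0 : 0 ≤ r) (hr1 : r ≤ 1),
        f (Kpt r (t + 2 * Real.pi * r) hr0 hr1) = f (Kpt r t hr0 hr1) := by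
      intro r t hr0 hr1
      have h := hfix (Kpt r t hr0 hr1)
      have hphi : φ (Kpt r t hr0 hr1) = Kpt r (t + 2 * Real.pi * r) hr0 hr1 := by
        apply Subtype.ext
        show (Kpt r t hr0 hr1).1 *
            Complex.exp (((2 * Real.pi * ‖(Kpt r t hr0 hr1).1‖ : ℝ) : ℂ) * Complex.I)
            = (Kpt r (t + 2 * Real.pi * r) hr0 hr1).1
        rw [Kpt_abs]
        show (r : ℂ) * Complex.exp ((t : ℂ) * Complex.I) *
            Complex.exp (((2 * Real.pi * r : ℝ) : ℂ) * Complex.I)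
            = (r : ℂ) * Complex.exp (((t + 2 * Real.pi * r : ℝ) : ℂ) * Complex.I)
        rw [mul_assoc, ← Complex.exp_add]
        congr 2
        push_cast
        ring
      rw [← hphi]
      exact h
    set c : ℝ := ‖z.1‖ with hc
    by_cases hc0 : c = 0
    · have hz0 : z.1 = 0 := by
        rw [← norm_eq_zero, ← hc, hc0]
      have hw0 : w.1 = 0 := by
        rw [← norm_eq_zero, ← habs]; exact hc0
      have : z = w := Subtype.ext (by rw [hz0, hw0])
      rw [this]
    · have hcpos : 0 < c := lt_of_le_of_ne (norm_nonneg z.1) (Ne.symm hc0)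
      have hc1 : c ≤ 1 := z.2
      -- clamped radial interpolation
      set cl : ℝ → ℝ := fun s => max 0 (min 1 s) with hcl
      have hcl0 : ∀ s, 0 ≤ cl s := fun s => le_max_left 0 _
      have hcl1 : ∀ s, cl s ≤ 1 := fun s => max_le (by norm_num) (min_le_left 1 s)
      have hmem : ∀ (s : ℝ) (ζ : K), ‖ζ.1‖ = c →
          ‖((cl s / c : ℝ) : ℂ) * ζ.1‖ ≤ 1 := by
        intro s ζ hζ
        rw [norm_mul, Complex.norm_real, Real.norm_eq_abs, hζ, _root_.abs_of_nonneg (div_nonneg (hcl0 s) hcpos.le),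
          div_mul_cancel₀ _ hc0]
        exact hcl1 s
      set u : ℝ → K := fun s => ⟨((cl s / c : ℝ) : ℂ) * z.1, hmem s z rfl⟩ with hu
      set v : ℝ → K := fun s => ⟨((cl s / c : ℝ) : ℂ) * w.1, hmem s w habs.symm⟩ with hv
      have huc : Continuous u := by
        apply Continuous.subtype_mk
        fun_prop
      have hvc : Continuous v := by
        apply Continuous.subtype_mk
        fun_prop
      have habs_u : ∀ s, ‖(u s).1‖ = cl s := by
        intro s
        show ‖((cl s / c : ℝ) : ℂ) * z.1‖ = cl s
        rw [norm_mul, Complex.norm_real, Real.norm_eq_abs, _root_.abs_of_nonneg (div_nonneg (hcl0 s) hcpos.le),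
          div_mul_cancel₀ _ hc0]
      have habs_v : ∀ s, ‖(v s).1‖ = cl s := by
        intro s
        show ‖((cl s / c : ℝ) : ℂ) * w.1‖ = cl s
        rw [norm_mul, Complex.norm_real, Real.norm_eq_abs, ← habs,
          _root_.abs_of_nonneg (div_nonneg (hcl0 s) hcpos.le), div_mul_cancel₀ _ hc0]
      have hclosed : IsClosed {s : ℝ | f (u s) = f (v s)} :=
        isClosed_eq (hf.comp huc) (hf.comp hvc)
      have hsub : Set.Ioo (0 : ℝ) 1 ∩ {x : ℝ | Irrational x} ⊆ {s : ℝ | f (u s) = f (v s)} := by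
        rintro s ⟨⟨hs0, hs1⟩, hsirr⟩
        have hcls : cl s = s := by
          rw [hcl]
          simp only
          rw [min_eq_right hs1.le, max_eq_right hs0.le]
        refine irr_const hf hrot (by rw [hcls]; exact hsirr) (hcl0 s) (hcl1 s) (u s) (v s) (habs_u s) (habs_v s)
      have hcmem : c ∈ {s : ℝ | f (u s) = f (v s)} := by
        have h1 : Set.Ioo (0 : ℝ) 1 ⊆
            closure (Set.Ioo (0 : ℝ) 1 ∩ {x : ℝ | Irrational x}) :=
          Dense.open_subset_closure_inter dense_irrational isOpen_Ioo
        have h2 : c ∈ closure (Set.Ioo (0 : ℝ) 1) := by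
          rw [closure_Ioo one_ne_zero.symm]
          exact ⟨hcpos.le, hc1⟩
        have h3 : c ∈ closure (Set.Ioo (0 : ℝ) 1 ∩ {x : ℝ | Irrational x}) := by
          have := closure_mono h1
          rw [closure_closure] at this
          exact this h2
        exact (closure_minimal hsub hclosed) (h3 : _)
      have huz : u c = z := by
        apply Subtype.ext
        show ((cl c / c : ℝ) : ℂ) * z.1 = z.1
        rw [show cl c = c by
          rw [hcl]; simp only; rw [min_eq_right hc1, max_eq_right hcpos.le],
          div_self hc0]
        simp
      have hvw : v c = w := by
        apply Subtype.ext
        show ((cl c / c : ℝ) : ℂ) * w.1 = w.1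
        rw [show cl c = c by
          rw [hcl]; simp only; rw [min_eq_right hc1, max_eq_right hcpos.le],
          div_self hc0]
        simp
      rw [← huz, ← hvw]
      exact hcmem
  · intro hrad z
    apply hrad
    show ‖z.1 * Complex.exp _‖ = ‖z.1‖
    rw [norm_mul, Complex.norm_exp_ofReal_mul_I, mul_one]
end

section
/- Let K = [0,∞] be the one-point compactification of [0,∞) and φ: K → K be defined by φ(x) = (x−n)² + n for x ∈ [n, n+1), n ∈ ℕ₀, and φ(∞) = ∞. Then φ is continuous, and every continuous f: K → ℂ with f ∘ φ = f is constant. -/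
open scoped NNReal
open Filter Topology Set


noncomputable def Gfun : ℝ → ℝ := fun x => x + ((Int.fract x) ^ 2 - Int.fract x)

lemma contG : Continuous Gfun := by
  apply ContinuousOn.comp_fract (f := fun (b : ℝ) (t : ℝ) => b + (t ^ 2 - t)) (s := id)
  · fun_prop
  · fun_prop
  · intro b; norm_num

noncomputable def gfun : ℝ≥0 → ℝ≥0 := fun r : ℝ≥0 => (r - (⌊r⌋₊ : ℝ≥0)) ^ 2 + (⌊r⌋₊ : ℝ≥0)

lemma floor_coe' (r : ℝ≥0) : ((⌊r⌋₊ : ℝ≥0) : ℝ) = (⌊(r : ℝ)⌋ : ℝ) := by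
  rw [show ⌊r⌋₊ = ⌊(r : ℝ)⌋₊ from (Nonneg.nat_floor_coe r).symm]
  rw [NNReal.coe_natCast]; exact natCast_floor_eq_intCast_floor r.2

lemma coe_gfun (r : ℝ≥0) : (gfun r : ℝ) = Gfun (r : ℝ) := by
  have hle : (⌊r⌋₊ : ℝ≥0) ≤ r := Nat.floor_le (show (0:ℝ≥0) ≤ r from zero_le)
  rw [gfun]
  push_cast [NNReal.coe_sub hle]
  rw [Gfun, Int.fract, ← floor_coe' r]
  push_cast
  ring

lemma cont_gfun : Continuous gfun := by
  have h : ∀ r : ℝ≥0, gfun r = Real.toNNReal (Gfun (r : ℝ)) := by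
    intro r
    rw [← coe_gfun, Real.toNNReal_coe]
  simp_rw [funext h]
  exact continuous_real_toNNReal.comp (contG.comp NNReal.continuous_coe)

lemma floor_le_gfun (r : ℝ≥0) : (⌊r⌋₊ : ℝ≥0) ≤ gfun r := le_add_self

lemma tendsto_gfun : Tendsto gfun (cocompact ℝ≥0) (cocompact ℝ≥0) := by
  rw [cocompact_eq_atTop]
  rw [tendsto_atTop]
  intro b
  filter_upwards [eventually_ge_atTop (b + 1)] with r hr
  have h1 : r < (⌊r⌋₊ : ℝ≥0) + 1 := Nat.lt_floor_add_one r
  have : b < (⌊r⌋₊ : ℝ≥0) := by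
    have := lt_of_le_of_lt hr h1
    exact lt_of_add_lt_add_right this
  exact this.le.trans (floor_le_gfun r)

lemma cont_phi : Continuous (OnePoint.map gfun) := by
  apply OnePoint.continuous_map cont_gfun
  simp only [Filter.coclosedCompact_eq_cocompact]
  exact tendsto_gfun

lemma fract_lt_one (r : ℝ≥0) : r - (⌊r⌋₊ : ℝ≥0) < 1 :=
  tsub_lt_iff_left (Nat.floor_le (show (0:ℝ≥0) ≤ r from zero_le)) |>.2 (Nat.lt_floor_add_one r)

lemma iter_gfun (r : ℝ≥0) (k : ℕ) :
    gfun^[k] r = (⌊r⌋₊ : ℝ≥0) + (r - (⌊r⌋₊ : ℝ≥0)) ^ (2 ^ k) := by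
  induction k with
  | zero => simp [add_tsub_cancel_of_le (Nat.floor_le (show (0:ℝ≥0) ≤ r from zero_le))]
  | succ k ih =>
    rw [Function.iterate_succ_apply', ih]
    set t := r - (⌊r⌋₊ : ℝ≥0) with ht
    have htlt : t ^ (2 ^ k) < 1 := pow_lt_one' (fract_lt_one r) (Nat.two_pow_pos k).ne'
    have hfl2 : ⌊(⌊r⌋₊ : ℝ≥0) + t ^ (2 ^ k)⌋₊ = ⌊r⌋₊ := by
      rw [add_comm, Nat.floor_add_natCast zero_le, Nat.floor_eq_zero.2 htlt, zero_add]
    rw [gfun]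
    simp only [hfl2, add_tsub_cancel_left]
    rw [add_comm, ← pow_mul, ← pow_succ]

lemma tendsto_iter (r : ℝ≥0) :
    Tendsto (fun k => gfun^[k] r) atTop (𝓝 (⌊r⌋₊ : ℝ≥0)) := by
  simp_rw [iter_gfun]
  have h0 : Tendsto (fun k : ℕ => (r - (⌊r⌋₊ : ℝ≥0)) ^ (2 ^ k)) atTop (𝓝 0) := by
    have h1 := NNReal.tendsto_pow_atTop_nhds_zero_of_lt_one (fract_lt_one r)
    exact h1.comp (tendsto_pow_atTop_atTop_of_one_lt one_lt_two)
  have h2 : Tendsto (fun _ : ℕ => (⌊r⌋₊ : ℝ≥0)) atTop (𝓝 (⌊r⌋₊ : ℝ≥0)) := tendsto_const_nhds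
  simpa using h2.add h0


/-- On the one-point compactification `K = [0,∞]` of `[0,∞)`, the map
`φ(x) = (x−n)² + n` on `[n,n+1)` (with `φ(∞) = ∞`) is continuous and every
continuous `f : K → ℂ` fixed by the Koopman operator is constant. -/
theorem compactified_squaring_system_uniquely_ergodic :
    let φ : OnePoint ℝ≥0 → OnePoint ℝ≥0 :=
      Option.map (fun r : ℝ≥0 => (r - (⌊r⌋₊ : ℝ≥0)) ^ 2 + (⌊r⌋₊ : ℝ≥0))
    Continuous φ ∧
      ∀ f : OnePoint ℝ≥0 → ℂ, Continuous f → (∀ x, f (φ x) = f x) →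
        ∀ x y : OnePoint ℝ≥0, f x = f y := by
  intro φ
  have hφ : φ = OnePoint.map gfun := rfl
  constructor
  · rw [hφ]; exact cont_phi
  · intro f hf hinv x y
    set F : ℝ≥0 → ℂ := fun r => f r with hF
    have hFc : Continuous F := hf.comp OnePoint.continuous_coe
    have hFg : ∀ r, F (gfun r) = F r := fun r => hinv (↑r)
    have hFiter : ∀ (k : ℕ) (r : ℝ≥0), F (gfun^[k] r) = F r := by
      intro k
      induction k with
      | zero => intro r; rfl
      | succ k ih => intro r; rw [Function.iterate_succ_apply', hFg, ih]
    have hfloor : ∀ r : ℝ≥0, F r = F (⌊r⌋₊ : ℝ≥0) := by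
      intro r
      have h1 : Tendsto (fun k => F (gfun^[k] r)) atTop (𝓝 (F (⌊r⌋₊ : ℝ≥0))) :=
        (hFc.continuousAt).tendsto.comp (tendsto_iter r)
      simp_rw [fun k => hFiter k r] at h1
      exact (tendsto_nhds_unique h1 tendsto_const_nhds).symm
    have hnat : ∀ n : ℕ, F n = F 0 := by
      intro n
      induction n with
      | zero => norm_num
      | succ n ih =>
        have hne : (𝓝[<] ((n : ℝ≥0) + 1)).NeBot :=
          nhdsWithin_Iio_self_neBot' ⟨0, show (0:ℝ≥0) < _ from add_pos_of_nonneg_of_pos zero_le zero_lt_one⟩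
        have hmem : Ioo (n : ℝ≥0) ((n : ℝ≥0) + 1) ∈ 𝓝[<] ((n : ℝ≥0) + 1) :=
          Ioo_mem_nhdsLT_of_mem ⟨lt_add_one _, le_refl _⟩
        have heq : ∀ x ∈ Ioo (n : ℝ≥0) ((n : ℝ≥0) + 1), F x = F n := by
          intro x hx
          have hfl : ⌊x⌋₊ = n := by
            rw [Nat.floor_eq_iff (show (0:ℝ≥0) ≤ x from zero_le)]
            exact ⟨hx.1.le, hx.2⟩
          rw [hfloor x, hfl]
        have hlim : Tendsto F (𝓝[<] ((n : ℝ≥0) + 1)) (𝓝 (F ((n : ℝ≥0) + 1))) :=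
          (hFc.continuousAt).continuousWithinAt.tendsto
        have h2 : Tendsto F (𝓝[<] ((n : ℝ≥0) + 1)) (𝓝 (F n)) :=
          tendsto_const_nhds.congr' (eventually_of_mem hmem fun x hx => (heq x hx).symm)
        have h3 : F ((n : ℝ≥0) + 1) = F n := tendsto_nhds_unique hlim h2
        rw [show ((n + 1 : ℕ) : ℝ≥0) = (n : ℝ≥0) + 1 by push_cast; ring, h3, ih]
    have hnc : NoncompactSpace ℝ≥0 := by
      rw [← Filter.cocompact_neBot_iff, cocompact_eq_atTop]
      infer_instance
    have hd : Dense (Set.range ((↑) : ℝ≥0 → OnePoint ℝ≥0)) := OnePoint.denseRange_coe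
    have hall : f = fun _ => F 0 := by
      apply Continuous.ext_on hd hf continuous_const
      rintro _ ⟨r, rfl⟩
      exact (hfloor r).trans (hnat _)
    rw [hall]
end
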